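/- The second marginal of the discrete Wigner transform satisfies Σ_{r=0}^{2N-1} W̃(ψ,φ)(r,s) = (1/N) Σ_{j=0}^{N-1} conj(ψ̂_j) φ̂_j · δ^{(2N)}_{s, 2j} where ψ̂_j = Σ_{m=0}^{N-1} ψ_m exp(-2πi m j/N) and similarly for φ̂. -/

import Mathlib

open scoped BigOperators
open Complex

noncomputable section

instance nz2N (N : ℕ) [NeZero N] : NeZero (2 * N) :=
  ⟨Nat.mul_ne_zero two_ne_zero (NeZero.ne N)⟩
/-- The discrete Wigner transform `W̃(ψ,φ)(r,s)`. -/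
def Wt (N : ℕ) [NeZero N] (ψ φ : ZMod N → ℂ) (r s : ℤ) : ℂ :=
  (1 / (2 * N : ℂ)) * ∑ l : ZMod N,
    (starRingEnd ℂ) (ψ ((r : ZMod N) - l)) * φ l *
      Complex.exp (-(Real.pi : ℂ) * Complex.I * ((2 * (l.val : ℤ) - r : ℤ) : ℂ) * (s : ℂ) / (N : ℂ))

/-- The discrete Fourier coefficients `ψ̂_j = Σ_m ψ_m e^{-2πi m j/N}`. -/
def dft (N : ℕ) [NeZero N] (ψ : ZMod N → ℂ) (j : ZMod N) : ℂ :=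
  ∑ m : ZMod N, ψ m * Complex.exp (-2 * (Real.pi : ℂ) * Complex.I * (m.val : ℂ) * (j.val : ℂ) / (N : ℂ))

/-! Writing the Wigner kernel with the standard additive character of `ZMod (2N)` and substituting
`r = 2l - u`, the `r`-sum of `W̃(ψ,φ)(·,s)` becomes `(2N)⁻¹` times the `2N`-point DFT at `s` of the
cross-correlation `c(m) = Σ_l conj ψ(l-m) φ(l)`, viewed as a function on `ZMod (2N)`.
A function pulled back from `ZMod N` to `ZMod (kN)` has DFT `k · 𝓕c(j)` at the frequency `kj` and
`0` off the multiples of `k` (Fourier inversion on `ZMod N` plus orthogonality of the characters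
of `ZMod (kN)`), and `𝓕c = conj ψ̂ · φ̂`. -/

open Finset
open scoped ZMod ComplexConjugate

namespace ZMod

theorem sum_univ_eq_sum_range {M : Type*} [AddCommMonoid M] (n : ℕ) [NeZero n]
    (f : ZMod n → M) : ∑ x : ZMod n, f x = ∑ m ∈ range n, f m :=
  sum_nbij' val (fun m => (m : ZMod n)) (fun x _ => mem_range.mpr (val_lt x))
    (fun _ _ => mem_univ _) (fun x _ => natCast_zmod_val x)
    (fun _ hm => val_natCast_of_lt (mem_range.mp hm)) (fun x _ => by rw [natCast_zmod_val])

section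

variable {N : ℕ} [NeZero N]

theorem stdAddChar_natCast_mul_val_mul (k : ℕ) [NeZero k] (j : ZMod N) (x : ZMod (k * N)) :
    stdAddChar ((k : ZMod (k * N)) * (j.val : ZMod (k * N)) * x) =
      stdAddChar (j * (x.cast : ZMod N)) := by
  have hk : (k : ℂ) ≠ 0 := Nat.cast_ne_zero.mpr (NeZero.ne k)
  have h₁ : (k : ZMod (k * N)) * (j.val : ZMod (k * N)) * x =
      (((k * j.val * x.val : ℕ) : ℤ) : ZMod (k * N)) := by
    rw [Int.cast_natCast, Nat.cast_mul, Nat.cast_mul, natCast_zmod_val x]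
  have h₂ : j * (x.cast : ZMod N) = (((j.val * x.val : ℕ) : ℤ) : ZMod N) := by
    rw [Int.cast_natCast, Nat.cast_mul, natCast_zmod_val j, natCast_val]
  rw [h₁, h₂, stdAddChar_coe, stdAddChar_coe]
  congr 1
  push_cast
  field_simp

theorem dft_comp_cast (k : ℕ) [NeZero k] (f : ZMod N → ℂ) (σ : ZMod (k * N)) :
    𝓕 (fun x : ZMod (k * N) => f x.cast) σ =
      k * ∑ j : ZMod N, if σ = k * (j.val : ZMod (k * N)) then 𝓕 f j else 0 := by
  have hN : (N : ℂ) ≠ 0 := Nat.cast_ne_zero.mpr (NeZero.ne N)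
  have inversion (x : ZMod (k * N)) : f x.cast = (N : ℂ)⁻¹ * ∑ j : ZMod N,
      stdAddChar ((k : ZMod (k * N)) * (j.val : ZMod (k * N)) * x) * 𝓕 f j := by
    conv_lhs => rw [← LinearEquiv.symm_apply_apply 𝓕 f]
    simp only [invDFT_apply, smul_eq_mul, stdAddChar_natCast_mul_val_mul]
  have orthogonality (y : ZMod (k * N)) :
      ∑ x : ZMod (k * N), stdAddChar (x * y) = if y = 0 then (k * N : ℂ) else 0 := by
    rw [AddChar.sum_mulShift _ (isPrimitive_stdAddChar _), card]
    push_cast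
    rfl
  calc 𝓕 (fun x : ZMod (k * N) => f x.cast) σ
      = (N : ℂ)⁻¹ * ∑ j : ZMod N, 𝓕 f j * ∑ x : ZMod (k * N),
          stdAddChar (x * ((k : ZMod (k * N)) * (j.val : ZMod (k * N)) - σ)) := by
        rw [dft_apply]
        simp only [inversion, smul_eq_mul, mul_sum]
        rw [sum_comm]
        refine sum_congr rfl fun j _ => sum_congr rfl fun x _ => ?_
        rw [mul_sub, sub_eq_add_neg, AddChar.map_add_eq_mul]
        ring_nf
    _ = _ := by
        simp only [orthogonality, sub_eq_zero, mul_ite, mul_zero, mul_sum, eq_comm (b := σ)]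
        refine sum_congr rfl fun j _ => ?_
        split_ifs <;> field_simp

def crossCorrelation (ψ φ : ZMod N → ℂ) (m : ZMod N) : ℂ :=
  ∑ l, conj (ψ (l - m)) * φ l

theorem dft_crossCorrelation (ψ φ : ZMod N → ℂ) (j : ZMod N) :
    𝓕 (crossCorrelation ψ φ) j = conj (𝓕 ψ j) * 𝓕 φ j := by
  have conj_dft : conj (𝓕 ψ j) = ∑ n, stdAddChar (n * j) * conj (ψ n) := by
    simp [dft_apply, AddChar.map_neg_eq_conj]
  rw [conj_dft, dft_apply, dft_apply, sum_mul_sum, sum_comm]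
  simp only [crossCorrelation, smul_eq_mul, mul_sum]
  rw [sum_comm]
  refine sum_congr rfl fun l _ => Fintype.sum_equiv (Equiv.subLeft l) _ _ fun m => ?_
  rw [Equiv.subLeft_apply, show -(m * j) = (l - m) * j + -(l * j) by ring,
    AddChar.map_add_eq_mul]
  ring

end

end ZMod

section

variable {N : ℕ} [NeZero N]

theorem dft_eq_zmod_dft (ψ : ZMod N → ℂ) : dft N ψ = 𝓕 ψ := by
  ext j
  refine sum_congr rfl fun m _ => ?_
  have hmj : -(m * j) = ((-(m.val * j.val : ℤ) : ℤ) : ZMod N) := by simp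
  rw [smul_eq_mul, mul_comm, hmj, ZMod.stdAddChar_coe]
  congr 2
  push_cast
  ring

theorem Wt_eq_sum_stdAddChar (ψ φ : ZMod N → ℂ) (r s : ℤ) :
    Wt N ψ φ r s = (2 * N : ℂ)⁻¹ * ∑ l : ZMod N,
      conj (ψ (((r : ZMod (2 * N)).cast : ZMod N) - l)) * φ l *
        ZMod.stdAddChar (((r : ZMod (2 * N)) - 2 * (l.val : ZMod (2 * N))) *
          (s : ZMod (2 * N))) := by
  rw [Wt, one_div]
  congr 1
  refine sum_congr rfl fun l _ => ?_
  have hexp : ((r : ZMod (2 * N)) - 2 * (l.val : ZMod (2 * N))) * (s : ZMod (2 * N)) =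
      (((r - 2 * l.val) * s : ℤ) : ZMod (2 * N)) := by
    push_cast
    ring
  rw [ZMod.cast_intCast (dvd_mul_left N 2), hexp, ZMod.stdAddChar_coe]
  congr 2
  push_cast
  field_simp
  ring

theorem sum_range_Wt (ψ φ : ZMod N → ℂ) (s : ℤ) :
    ∑ r ∈ range (2 * N), Wt N ψ φ r s =
      (2 * N : ℂ)⁻¹ * 𝓕 (fun x : ZMod (2 * N) => ZMod.crossCorrelation ψ φ x.cast) s := by
  simp only [Wt_eq_sum_stdAddChar, Int.cast_natCast, ← mul_sum]
  rw [← ZMod.sum_univ_eq_sum_range (2 * N) fun x => ∑ l : ZMod N,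
      conj (ψ ((x.cast : ZMod N) - l)) * φ l *
        ZMod.stdAddChar ((x - 2 * (l.val : ZMod (2 * N))) * (s : ZMod (2 * N)))]
  congr 1
  rw [ZMod.dft_apply, sum_comm]
  simp only [ZMod.crossCorrelation, smul_eq_mul, mul_sum]
  conv_rhs => rw [sum_comm]
  refine sum_congr rfl fun l _ =>
    Fintype.sum_equiv (Equiv.subLeft (2 * (l.val : ZMod (2 * N)))) _ _ fun x => ?_
  have hcast : ((2 * (l.val : ZMod (2 * N)) - x).cast : ZMod N) = 2 * l - x.cast := by
    have hπ (y : ZMod (2 * N)) : (y.cast : ZMod N) = ZMod.castHom (dvd_mul_left N 2) (ZMod N) y :=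
      rfl
    rw [hπ, hπ x, map_sub, map_mul, map_ofNat, map_natCast, ZMod.natCast_zmod_val]
  rw [Equiv.subLeft_apply, hcast, show l - (2 * l - x.cast) = x.cast - l by ring, ← neg_mul,
    neg_sub]
  ring

end

theorem wigner_second_marginal_general (N : ℕ) [NeZero N] (ψ φ : ZMod N → ℂ)
    (s : ℕ) :
    ∑ r ∈ Finset.range (2 * N), Wt N ψ φ (r : ℤ) (s : ℤ) =
      (1 / (N : ℂ)) * ∑ j : ZMod N, (starRingEnd ℂ) (dft N ψ j) * dft N φ j *
        (if (s : ZMod (2 * N)) = 2 * (j.val : ZMod (2 * N)) then 1 else 0) := by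
  rw [sum_range_Wt, Int.cast_natCast, ZMod.dft_comp_cast 2, dft_eq_zmod_dft, dft_eq_zmod_dft]
  simp only [ZMod.dft_crossCorrelation, Nat.cast_ofNat, mul_ite, mul_one, mul_zero]
  field_simp

/-- the second marginal of the discrete Wigner transform. -/
theorem wigner_second_marginal (N : ℕ) [NeZero N] (ψ φ : ZMod N → ℂ)
    (s : ℕ) (hs : s < 2 * N) :
    ∑ r ∈ Finset.range (2 * N), Wt N ψ φ (r : ℤ) (s : ℤ) =
      (1 / (N : ℂ)) * ∑ j : ZMod N, (starRingEnd ℂ) (dft N ψ j) * dft N φ j *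
        (if (s : ZMod (2 * N)) = 2 * (j.val : ZMod (2 * N)) then 1 else 0) :=
  wigner_second_marginal_general N ψ φ s
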